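/- (Score-function gradient identity for the Gaussian-smoothed loss.) Let σ > 0 and let L : ℝ → ℝ be measurable and bounded. Define the smoothed loss L_p(θ) = ∫ L(v) dN(θ, σ²)(v). Then L_p is differentiable at every θ ∈ ℝ and its derivative is given by L_p'(θ) = ∫ L(v)·(v − θ)/σ² dN(θ, σ²)(v). -/

import Mathlib

open MeasureTheory ProbabilityTheory Real Topology
open scoped NNReal

/-!
Writing `N(t, σ²)` as the density `gaussianPDFReal t σ²` against Lebesgue measure, the smoothed
loss is `t ↦ ∫ pdf t · L`, and `∂ₜ pdf t = pdf t · (v - t) / σ²`. Differentiation under the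
integral sign is justified because `L` is bounded and, for `|t - θ| < 1`, the derivative of the
density is dominated by `(1 + |v - θ|) exp (-(v - θ)² / (4σ²))` up to a constant.
-/

theorem hasDerivAt_integral_mul_of_bdd {α : Type*} [MeasurableSpace α] {μ : Measure α}
    {p p' : ℝ → α → ℝ} {L g : α → ℝ} {C θ : ℝ} {s : Set ℝ} (hs : s ∈ 𝓝 θ)
    (hp : ∀ t, AEStronglyMeasurable (p t) μ) (hpθ : Integrable (p θ) μ)
    (hp'θ : AEStronglyMeasurable (p' θ) μ)
    (hderiv : ∀ᵐ x ∂μ, ∀ t ∈ s, HasDerivAt (p · x) (p' t x) t)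
    (hp'g : ∀ᵐ x ∂μ, ∀ t ∈ s, ‖p' t x‖ ≤ g x) (hg : Integrable g μ)
    (hL : AEStronglyMeasurable L μ) (hLC : ∀ᵐ x ∂μ, ‖L x‖ ≤ C) :
    HasDerivAt (fun t => ∫ x, p t x * L x ∂μ) (∫ x, p' θ x * L x ∂μ) θ := by
  refine (hasDerivAt_integral_of_dominated_loc_of_deriv_le (bound := fun x => g x * C)
    (F' := fun t x => p' t x * L x) hs
    (.of_forall fun t => (hp t).mul hL) (hpθ.mul_bdd hL hLC) (hp'θ.mul hL) ?_
    (hg.mul_const C) ?_).2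
  · filter_upwards [hp'g, hLC] with x hx hLx t ht
    rw [norm_mul]
    exact mul_le_mul (hx t ht) hLx (norm_nonneg _) ((norm_nonneg _).trans (hx t ht))
  · filter_upwards [hderiv] with x hx t ht
    exact (hx t ht).mul_const (L x)

theorem hasDerivAt_gaussianPDFReal_mean (v : ℝ≥0) (x θ : ℝ) :
    HasDerivAt (fun t => gaussianPDFReal t v x) (gaussianPDFReal θ v x * ((x - θ) / v)) θ := by
  have h := ((((hasDerivAt_id θ).const_sub x).pow 2).neg.div_const (2 * (v : ℝ))).exp.const_mul
    (√(2 * π * v))⁻¹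
  refine h.congr_deriv ?_
  simp only [gaussianPDFReal, id, Pi.pow_apply, Pi.neg_apply]
  ring

theorem exp_neg_mul_sq_le_of_abs_sub_le {b x t θ : ℝ} (hb : 0 ≤ b) (ht : |t - θ| ≤ 1) :
    rexp (-b * (x - t) ^ 2) ≤ rexp b * rexp (-(b / 2) * (x - θ) ^ 2) := by
  rw [← exp_add, exp_le_exp]
  have hsq : (x - θ) ^ 2 / 2 - (x - t) ^ 2 - 1 ≤ 0 := by
    nlinarith [sq_nonneg (x - t - (t - θ)), abs_le.1 ht]
  nlinarith [mul_nonpos_of_nonneg_of_nonpos hb hsq]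

theorem integrable_one_add_abs_mul_exp_neg_mul_sq {b : ℝ} (hb : 0 < b) (θ : ℝ) :
    Integrable fun x => (1 + |x - θ|) * rexp (-b * (x - θ) ^ 2) := by
  have h := (integrable_exp_neg_mul_sq hb).add (integrable_mul_exp_neg_mul_sq hb).norm
  refine Integrable.comp_sub_right (f := fun y => (1 + |y|) * rexp (-b * y ^ 2))
    (h.congr (.of_forall fun y => ?_)) θ
  simp only [Pi.add_apply, norm_mul, Real.norm_eq_abs, abs_of_pos (exp_pos _)]
  ring

theorem exists_integrable_bound_gaussianPDFReal_mul_score (θ : ℝ) {v : ℝ≥0} (hv : v ≠ 0) :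
    ∃ g : ℝ → ℝ, Integrable g ∧
      ∀ x, ∀ t ∈ Metric.ball θ 1, ‖gaussianPDFReal t v x * ((x - t) / v)‖ ≤ g x := by
  have hv_pos : (0 : ℝ) < v := NNReal.coe_pos.2 (pos_iff_ne_zero.2 hv)
  set b : ℝ := (2 * v)⁻¹
  have hb : 0 < b := by positivity
  set c : ℝ := (√(2 * π * v))⁻¹
  refine ⟨fun x => c * rexp b / v * ((1 + |x - θ|) * rexp (-(b / 2) * (x - θ) ^ 2)),
    (integrable_one_add_abs_mul_exp_neg_mul_sq (by positivity) θ).const_mul _, fun x t ht => ?_⟩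
  have ht : |t - θ| ≤ 1 := (Metric.mem_ball.1 ht).le
  have hpdf : gaussianPDFReal t v x = c * rexp (-b * (x - t) ^ 2) := by
    rw [gaussianPDFReal]; congr 2; ring
  have hdist : |x - t| ≤ 1 + |x - θ| := by
    calc |x - t| ≤ |x - θ| + |θ - t| := abs_sub_le x θ t
      _ ≤ 1 + |x - θ| := by rw [abs_sub_comm θ t]; linarith
  calc ‖gaussianPDFReal t v x * ((x - t) / v)‖
      = c * rexp (-b * (x - t) ^ 2) * |x - t| / v := by
        rw [hpdf, Real.norm_eq_abs, abs_mul, abs_div, abs_of_pos hv_pos,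
          abs_of_nonneg (by positivity)]
        ring
    _ ≤ c * (rexp b * rexp (-(b / 2) * (x - θ) ^ 2)) * (1 + |x - θ|) / v := by
        gcongr
        exact exp_neg_mul_sq_le_of_abs_sub_le hb.le ht
    _ = c * rexp b / v * ((1 + |x - θ|) * rexp (-(b / 2) * (x - θ) ^ 2)) := by ring

/-- Score-function gradient identity for the Gaussian-smoothed loss: for bounded measurable
`L`, the smoothed loss `L_p(θ) = ∫ L dN(θ, σ²)` is differentiable with
`L_p'(θ) = ∫ L(v)·(v − θ)/σ² dN(θ, σ²)(v)`. -/
theorem smoothed_loss_score_gradient (σ : ℝ) (hσ : σ > 0) (L : ℝ → ℝ)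
    (hL : Measurable L) (C : ℝ) (hbd : ∀ v : ℝ, |L v| ≤ C) (θ : ℝ) :
    HasDerivAt (fun θ : ℝ => ∫ v, L v ∂(gaussianReal θ ⟨σ ^ 2, sq_nonneg σ⟩))
      (∫ v, L v * (v - θ) / σ ^ 2 ∂(gaussianReal θ ⟨σ ^ 2, sq_nonneg σ⟩)) θ := by
  set V : ℝ≥0 := ⟨σ ^ 2, sq_nonneg σ⟩
  have hV : V ≠ 0 := fun h => (pow_pos hσ 2).ne' (congrArg NNReal.toReal h)
  obtain ⟨g, hg, hbound⟩ := exists_integrable_bound_gaussianPDFReal_mul_score θ hV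
  simp only [integral_gaussianReal_eq_integral_smul hV, smul_eq_mul]
  have h := hasDerivAt_integral_mul_of_bdd (Metric.ball_mem_nhds θ one_pos)
    (fun t => (measurable_gaussianPDFReal t V).aestronglyMeasurable)
    (integrable_gaussianPDFReal θ V)
    (((measurable_gaussianPDFReal θ V).mul (by fun_prop)).aestronglyMeasurable)
    (.of_forall fun x t _ => hasDerivAt_gaussianPDFReal_mean V x t)
    (.of_forall hbound) hg hL.aestronglyMeasurable
    (.of_forall fun x => (norm_eq_abs _).trans_le (hbd x))
  refine h.congr_deriv (integral_congr_ae (.of_forall fun x => ?_))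
  rw [show (V : ℝ) = σ ^ 2 from rfl]
  ring
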